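/- For q = 2 the limit lim_{n→∞} |W_{2,n+1}|/|W_{2,n}| exists and equals the Tribonacci constant, the unique real root greater than 1 of x³ = x² + x + 1, which equals (1 + ∛(19+3√33) + ∛(19−3√33))/3. -/
import Mathlib


/-- `isValid c d w` says every maximal factor of `w` of the form `0^a 1^b`
with `a > 0` satisfies `a * (c/d) > b`, i.e. `c*a > d*b`.
Here `false` plays the role of `0` and `true` of `1`; maximality is expressed
by requiring the prefix to end with `1` (or be empty) and the suffix to start
with `0` (or be empty). -/
def isValid (c d : ℕ) (w : List Bool) : Prop :=
  ∀ p s : List Bool, ∀ a b : ℕ,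
    w = p ++ List.replicate a false ++ List.replicate b true ++ s →
    (p = [] ∨ p.getLast? = some true) →
    (s = [] ∨ s.head? = some false) →
    0 < a → d * b < c * a

/-- number of words of length `n` in `W_{c/d,n}` -/
noncomputable def wcount (c d n : ℕ) : ℕ :=
  Nat.card {w : List Bool // w.length = n ∧ isValid c d w}

mutual
def gdA : ℕ → List Bool → Bool
  | _, [] => true
  | b, true :: l => gdA (b+1) l
  | b, false :: l => gdZ b 1 l
def gdZ : ℕ → ℕ → List Bool → Bool
  | b, a, [] => decide (b < 2*a)
  | b, a, false :: l => gdZ b (a+1) l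
  | b, a, true :: l => decide (b < 2*a) && gdA 1 l
end

/-- monotonicity in the ones-counter -/
lemma gd_mono : ∀ (l : List Bool) (b b' a : ℕ), b' ≤ b →
    (gdA b l = true → gdA b' l = true) ∧ (gdZ b a l = true → gdZ b' a l = true) := by
  intro l
  induction l with
  | nil =>
    intro b b' a h
    constructor
    · intro _; rfl
    · simp only [gdZ, decide_eq_true_eq]; omega
  | cons x l ih =>
    intro b b' a h
    cases x
    · constructor
      · simp only [gdA]; exact (ih b b' 1 h).2
      · simp only [gdZ]; exact (ih b b' (a+1) h).2
    · constructor
      · simp only [gdA]; exact (ih (b+1) (b'+1) a (by omega)).1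
      · simp only [gdZ, Bool.and_eq_true, decide_eq_true_eq]
        rintro ⟨h1, h2⟩; exact ⟨by omega, h2⟩

lemma gdZ_key : ∀ (l : List Bool) (b a : ℕ), b < 2*a → gdZ b a l = gdA 0 l := by
  intro l
  induction l with
  | nil => intro b a h; simp only [gdZ, gdA]; simpa using h
  | cons x l ih =>
    intro b a h
    cases x
    · simp only [gdZ, gdA]
      rw [ih b (a+1) (by omega), ih 0 1 (by omega)]
    · simp only [gdZ, gdA]; simp [h]

lemma gdA_ones (k : ℕ) : ∀ (b : ℕ) (l : List Bool),
    gdA b (List.replicate k true ++ l) = gdA (b + k) l := by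
  induction k with
  | zero => simp
  | succ k ih =>
    intro b l
    simp only [List.replicate_succ, List.cons_append, gdA]
    have : b + (k+1) = (b+1)+k := by omega
    rw [this]; exact ih (b+1) l

lemma gdZ_zeros (k : ℕ) : ∀ (b a : ℕ) (l : List Bool),
    gdZ b a (List.replicate k false ++ l) = gdZ b (a + k) l := by
  induction k with
  | zero => simp
  | succ k ih =>
    intro b a l
    simp only [List.replicate_succ, List.cons_append, gdZ]
    have : a + (k+1) = (a+1)+k := by omega
    rw [this]; exact ih b (a+1) l

lemma gdA_zeros (k : ℕ) (hk : 0 < k) (b : ℕ) (l : List Bool) :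
    gdA b (List.replicate k false ++ l) = gdZ b k l := by
  obtain ⟨k', rfl⟩ : ∃ k', k = k' + 1 := ⟨k - 1, by omega⟩
  simp only [List.replicate_succ, List.cons_append, gdA, List.append_eq]
  rw [gdZ_zeros, Nat.add_comm]

lemma gdA_false (l : List Bool) : gdA 0 (false :: l) = gdA 0 l := by
  simp only [gdA]; exact gdZ_key l 0 1 (by omega)

lemma gdA_tf (l : List Bool) : gdA 0 (true :: false :: l) = gdA 0 l := by
  simp only [gdA]; exact gdZ_key l 1 1 (by omega)

def dupF : List Bool → List Bool
  | [] => [true]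
  | false :: l => false :: false :: l
  | true :: l => true :: dupF l

lemma dupF_length : ∀ l : List Bool, (dupF l).length = l.length + 1 := by
  intro l
  induction l with
  | nil => rfl
  | cons x l ih => cases x <;> simp [dupF, ih]

lemma dupF_ne_nil : ∀ l : List Bool, dupF l ≠ [] := by
  intro l h
  have := dupF_length l
  rw [h] at this
  simp at this

lemma dupF_inj : ∀ l m : List Bool, dupF l = dupF m → l = m := by
  intro l
  induction l with
  | nil =>
    intro m h
    cases m with
    | nil => rfl
    | cons y m =>
      cases y
      · exact absurd h (by simp [dupF])
      · simp only [dupF, List.cons.injEq, true_and] at h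
        exact absurd h.symm (dupF_ne_nil m)
  | cons x l ih =>
    intro m h
    cases x
    · cases m with
      | nil => exact absurd h (by simp [dupF])
      | cons y m =>
        cases y
        · simp only [dupF, List.cons.injEq, true_and] at h
          rw [h]
        · exact absurd h (by simp [dupF])
    · cases m with
      | nil =>
        simp only [dupF, List.cons.injEq, true_and] at h
        exact absurd h (dupF_ne_nil l)
      | cons y m =>
        cases y
        · exact absurd h (by simp [dupF])
        · simp only [dupF, List.cons.injEq, true_and] at h
          rw [ih m h]

lemma gdZ_shift2 : ∀ (l : List Bool) (b a : ℕ), gdZ (b+2) (a+1) l = gdZ b a l := by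
  intro l
  induction l with
  | nil => intro b a; simp only [gdZ, decide_eq_decide]; omega
  | cons x l ih =>
    intro b a
    cases x
    · simp only [gdZ]; exact ih b (a+1)
    · simp only [gdZ]
      have : decide ((b+2) < 2*(a+1)) = decide (b < 2*a) := by simp; omega
      rw [this]

lemma gdA_dupF : ∀ (l : List Bool) (b : ℕ), gdA (b+2) (dupF l) = gdA b l := by
  intro l
  induction l with
  | nil => intro b; simp [dupF, gdA]
  | cons x l ih =>
    intro b
    cases x
    · simp only [dupF, gdA, gdZ]; exact gdZ_shift2 l b 1
    · simp only [dupF, gdA]; exact ih (b+1)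

lemma dupF_surj : ∀ (m : List Bool) (b : ℕ), m ≠ [] → gdA (b+2) m = true →
    ∃ l, dupF l = m := by
  intro m
  induction m with
  | nil => intro b h _; exact absurd rfl h
  | cons x m ih =>
    intro b _ hg
    cases x
    · -- m' must start with false
      cases m with
      | nil => exfalso; simp only [gdA, gdZ, decide_eq_true_eq] at hg; omega
      | cons y m' =>
        cases y
        · exact ⟨false :: m', rfl⟩
        · exfalso
          simp only [gdA, gdZ, Bool.and_eq_true, decide_eq_true_eq] at hg
          omega
    · cases m with
      | nil => exact ⟨[], rfl⟩
      | cons y m' =>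
        simp only [gdA] at hg
        obtain ⟨l, hl⟩ := ih (b+1) (by simp) hg
        exact ⟨true :: l, by simp [dupF, hl]⟩

def allW : ℕ → Finset (List Bool)
  | 0 => {[]}
  | n+1 => (allW n).image (false :: ·) ∪ (allW n).image (true :: ·)

lemma mem_allW : ∀ n (w : List Bool), w ∈ allW n ↔ w.length = n := by
  intro n
  induction n with
  | zero => intro w; simp [allW, List.length_eq_zero_iff]
  | succ n ih =>
    intro w
    simp only [allW, Finset.mem_union, Finset.mem_image]
    constructor
    · rintro (⟨u, hu, rfl⟩ | ⟨u, hu, rfl⟩) <;> simp [(ih u).1 hu]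
    · intro hw
      cases w with
      | nil => simp at hw
      | cons x u =>
        have : u ∈ allW n := (ih u).2 (by simpa using hw)
        cases x
        · exact Or.inl ⟨u, this, rfl⟩
        · exact Or.inr ⟨u, this, rfl⟩

noncomputable def gcount (b n : ℕ) : ℕ := ((allW n).filter (fun l => gdA b l = true)).card

lemma filter_image_cons (x : Bool) (s : Finset (List Bool)) (p : List Bool → Bool) :
    (s.image (x :: ·)).filter (fun l => p l = true) =
      (s.filter (fun l => p (x :: l) = true)).image (x :: ·) := by
  ext w
  simp only [Finset.mem_filter, Finset.mem_image]
  constructor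
  · rintro ⟨⟨u, hu, rfl⟩, hp⟩; exact ⟨u, ⟨hu, hp⟩, rfl⟩
  · rintro ⟨u, ⟨hu, hp⟩, rfl⟩; exact ⟨⟨u, hu, rfl⟩, hp⟩

lemma cons_inj (x : Bool) : Function.Injective (x :: · : List Bool → List Bool) := by
  intro a b h; simpa using h


lemma gcount_split (b n : ℕ) :
    gcount b (n+1) = ((allW n).filter (fun l => gdA b (false :: l) = true)).card
      + ((allW n).filter (fun l => gdA b (true :: l) = true)).card := by
  unfold gcount
  rw [show allW (n+1) = (allW n).image (false :: ·) ∪ (allW n).image (true :: ·) from rfl]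
  rw [Finset.filter_union, Finset.card_union_of_disjoint, filter_image_cons, filter_image_cons,
    Finset.card_image_of_injective _ (cons_inj false), Finset.card_image_of_injective _ (cons_inj true)]
  · rw [Finset.disjoint_left]
    rintro w hw hw'
    simp only [filter_image_cons, Finset.mem_image] at hw hw'
    obtain ⟨u, _, rfl⟩ := hw
    obtain ⟨v, _, h⟩ := hw'
    simp at h

lemma gcount2_eq (n : ℕ) : gcount 2 (n+1) = gcount 0 n := by
  unfold gcount
  symm
  apply Finset.card_bij (fun l _ => dupF l)
  · intro l hl
    simp only [Finset.mem_filter, mem_allW] at hl ⊢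
    exact ⟨by rw [dupF_length, hl.1], by rw [show (2:ℕ) = 0 + 2 from rfl, gdA_dupF]; exact hl.2⟩
  · intro l₁ h₁ l₂ h₂ h
    exact dupF_inj _ _ h
  · intro m hm
    simp only [Finset.mem_filter, mem_allW] at hm
    obtain ⟨l, rfl⟩ := dupF_surj m 0 (by intro h; rw [h] at hm; simp at hm) hm.2
    refine ⟨l, ?_, rfl⟩
    simp only [Finset.mem_filter, mem_allW]
    have hlen := dupF_length l
    constructor
    · omega
    · rw [← gdA_dupF l 0]; exact hm.2

lemma gcount_rec (n : ℕ) : gcount 0 (n+3) = gcount 0 (n+2) + gcount 0 (n+1) + gcount 0 n := by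
  have e1 : Finset.filter (fun l => gdA 0 (false :: l) = true) (allW (n+2))
      = Finset.filter (fun l => gdA 0 l = true) (allW (n+2)) := by
    apply Finset.filter_congr; intro l _; simp [gdA_false l]
  have e2 : Finset.filter (fun l => gdA 1 (false :: l) = true) (allW (n+1))
      = Finset.filter (fun l => gdA 0 l = true) (allW (n+1)) := by
    apply Finset.filter_congr; intro l _
    have h : gdA 1 (false :: l) = gdA 0 l := by
      have : gdA 1 (false :: l) = gdA 0 (true :: false :: l) := rfl
      rw [this, gdA_tf]
    simp [h]
  have e3 : Finset.filter (fun l => gdA 0 (true :: l) = true) (allW (n+2))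
      = Finset.filter (fun l => gdA 1 l = true) (allW (n+2)) := rfl
  have e4 : Finset.filter (fun l => gdA 1 (true :: l) = true) (allW (n+1))
      = Finset.filter (fun l => gdA 2 l = true) (allW (n+1)) := rfl
  have h1 : gcount 0 (n+3) = ((allW (n+2)).filter (fun l => gdA 0 (false :: l) = true)).card
      + ((allW (n+2)).filter (fun l => gdA 0 (true :: l) = true)).card := gcount_split 0 (n+2)
  have h2 : gcount 1 (n+2) = ((allW (n+1)).filter (fun l => gdA 1 (false :: l) = true)).card
      + ((allW (n+1)).filter (fun l => gdA 1 (true :: l) = true)).card := gcount_split 1 (n+1)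
  unfold gcount at h1 h2 ⊢
  rw [e1, e3] at h1
  rw [e2, e4] at h2
  have h3 := gcount2_eq n
  unfold gcount at h3
  omega


lemma gcount_base0 : gcount 0 0 = 1 := by decide
lemma gcount_base1 : gcount 0 1 = 2 := by decide
lemma gcount_base2 : gcount 0 2 = 4 := by decide

lemma gdZ_lt (b a : ℕ) (r : List Bool) (h : gdZ b a r = true)
    (hr : r = [] ∨ r.head? = some true) : b < 2*a := by
  rcases r with _ | ⟨x, r'⟩
  · simpa [gdZ] using h
  · rcases hr with h' | h'
    · simp at h'
    · simp only [List.head?_cons, Option.some.injEq] at h'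
      subst h'
      simp only [gdZ, Bool.and_eq_true, decide_eq_true_eq] at h
      exact h.1

lemma gdZ_intro (b a : ℕ) (r : List Bool) (hba : b < 2*a) (hr : r = [] ∨ r.head? = some true)
    (h : gdA 0 r = true) : gdZ b a r = true := by
  rcases r with _ | ⟨x, r'⟩
  · simp [gdZ]; omega
  · rcases hr with h' | h'
    · simp at h'
    · simp only [List.head?_cons, Option.some.injEq] at h'
      subst h'
      simp only [gdZ, Bool.and_eq_true, decide_eq_true_eq]
      exact ⟨hba, h⟩

/-- every list splits off its leading false-run -/
lemma split_falses : ∀ m : List Bool, ∃ a r, m = List.replicate a false ++ r ∧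
    (r = [] ∨ r.head? = some true) := by
  intro m
  induction m with
  | nil => exact ⟨0, [], by simp⟩
  | cons x m ih =>
    cases x
    · obtain ⟨a, r, heq, hr⟩ := ih
      exact ⟨a+1, r, by simp [List.replicate_succ, heq], hr⟩
    · exact ⟨0, true :: m, by simp, Or.inr rfl⟩

/-- every list splits as ones, or ones-falses-rest -/
lemma split_head : ∀ m : List Bool, (∃ k, m = List.replicate k true) ∨
    ∃ b a r, m = List.replicate b true ++ List.replicate a false ++ r ∧ 0 < a ∧
      (r = [] ∨ r.head? = some true) := by
  intro m
  induction m with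
  | nil => exact Or.inl ⟨0, rfl⟩
  | cons x m ih =>
    cases x
    · obtain ⟨a, r, heq, hr⟩ := split_falses m
      exact Or.inr ⟨0, a+1, r, by simp [List.replicate_succ, heq], by omega, hr⟩
    · rcases ih with ⟨k, hk⟩ | ⟨b, a, r, heq, ha, hr⟩
      · exact Or.inl ⟨k+1, by simp [List.replicate_succ, hk]⟩
      · exact Or.inr ⟨b+1, a, r, by simp [List.replicate_succ, heq], ha, hr⟩

lemma head?_append_left (z : List Bool) {s' : List Bool} (hs : s'.head? = some false) :
    (s' ++ z).head? = some false := by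
  rcases s' with _ | ⟨y, t⟩
  · simp at hs
  · simpa using hs

lemma valid_of_gd : ∀ (n : ℕ) (w : List Bool), w.length ≤ n →
    gdA 0 w.reverse = true → isValid 2 1 w := by
  intro n
  induction n with
  | zero =>
    intro w hw _ p s a b heq hp hs ha
    -- w = [], so replicate a false is a sublist of []: contradiction
    exfalso
    have hw0 : w = [] := List.eq_nil_of_length_eq_zero (by omega)
    rw [hw0] at heq
    have := congrArg List.length heq
    simp at this
    omega
  | succ n ih =>
    intro w hw hgd p s a b heq hp hs ha
    rcases s.eq_nil_or_concat with rfl | ⟨s', x, rfl⟩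
    all_goals simp only [List.concat_eq_append] at *
    · -- s = []
      have hrev : w.reverse = List.replicate b true ++ (List.replicate a false ++ p.reverse) := by
        rw [heq]
        simp [List.reverse_append, List.append_assoc]
      rw [hrev, gdA_ones, gdA_zeros a ha] at hgd
      have hb : b < 2*a := by
        apply gdZ_lt _ _ _ (by simpa using hgd)
        rcases hp with rfl | hp
        · left; simp
        · right; rwa [List.head?_reverse]
      omega
    · -- s = s' ++ [x]
      have hd : (s' ++ [x]).head? = some false := by
        rcases hs with h | h
        · simp at h
        · exact h
      set w' := p ++ List.replicate a false ++ List.replicate b true ++ s' with hw'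
      have heq' : w = w' ++ [x] := by rw [heq, hw']; simp [List.append_assoc]
      have hlen : w'.length ≤ n := by
        have := congrArg List.length heq'
        simp at this
        omega
      have hgd' : gdA 0 w'.reverse = true := by
        rw [heq'] at hgd
        simp only [List.reverse_append, List.reverse_singleton, List.singleton_append] at hgd
        cases x
        · rwa [gdA_false] at hgd
        · have : gdA 1 w'.reverse = true := hgd
          exact (gd_mono w'.reverse 1 0 0 (by omega)).1 this
      refine ih w' hlen hgd' p s' a b rfl hp ?_ ha
      rcases s' with _ | ⟨y, t⟩
      · left; rfl
      · right
        simpa using hd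

lemma gd_of_valid : ∀ (n : ℕ) (w : List Bool), w.length ≤ n →
    isValid 2 1 w → gdA 0 w.reverse = true := by
  intro n
  induction n with
  | zero =>
    intro w hw _
    have hw0 : w = [] := List.eq_nil_of_length_eq_zero (by omega)
    subst hw0
    rfl
  | succ n ih =>
    intro w hw hv
    rcases split_head w.reverse with ⟨k, hk⟩ | ⟨b, a, r, heq, ha, hr⟩
    · rw [hk, ← List.append_nil (List.replicate k true), gdA_ones]
      rfl
    · -- w = r.reverse ++ 0^a ++ 1^b
      have hwq : w = r.reverse ++ (List.replicate a false ++ (List.replicate b true ++ [])) := by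
        have := congrArg List.reverse heq
        simp only [List.reverse_reverse, List.reverse_append, List.reverse_replicate] at this
        rw [this]
        simp [List.append_assoc]
      have hpmax : r.reverse = [] ∨ r.reverse.getLast? = some true := by
        rcases hr with rfl | h
        · left; rfl
        · right; rwa [List.getLast?_reverse]
      have hb : b < 2*a := by
        have := hv r.reverse [] a b (by simpa using hwq) hpmax (Or.inl rfl) ha
        omega
      have hvr : isValid 2 1 r.reverse := by
        intro p' s' a' b' heq' hp' hs' ha'
        refine hv p' (s' ++ (List.replicate a false ++ List.replicate b true)) a' b' ?_ hp' ?_ ha'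
        · rw [hwq, heq']
          simp [List.append_assoc]
        · right
          rcases hs' with rfl | h
          · obtain ⟨a'', rfl⟩ : ∃ a'', a = a'' + 1 := ⟨a-1, by omega⟩
            simp [List.replicate_succ]
          · exact head?_append_left _ h
      have hlen : r.reverse.length ≤ n := by
        have := congrArg List.length heq
        simp at this ⊢
        omega
      have hgr : gdA 0 r = true := by
        have := ih r.reverse hlen hvr
        rwa [List.reverse_reverse] at this
      rw [heq, List.append_assoc, gdA_ones, gdA_zeros a ha]
      apply gdZ_intro _ _ _ (by omega) hr hgr

lemma wcount_eq_gcount (n : ℕ) : wcount 2 1 n = gcount 0 n := by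
  have key : ∀ w : List Bool, (w.length = n ∧ isValid 2 1 w) ↔
      w ∈ (allW n).filter (fun w => gdA 0 w.reverse = true) := by
    intro w
    simp only [Finset.mem_filter, mem_allW]
    constructor
    · rintro ⟨h1, h2⟩; exact ⟨h1, gd_of_valid w.length w le_rfl h2⟩
    · rintro ⟨h1, h2⟩; exact ⟨h1, valid_of_gd w.length w le_rfl h2⟩
  have e1 : wcount 2 1 n
      = ((allW n).filter (fun w => gdA 0 w.reverse = true)).card := by
    unfold wcount
    rw [Nat.card_congr (Equiv.subtypeEquivRight key)]
    exact Nat.card_eq_finsetCard _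
  rw [e1]
  unfold gcount
  apply Finset.card_bij (fun l _ => l.reverse)
  · intro l hl
    simp only [Finset.mem_filter, mem_allW] at hl ⊢
    exact ⟨by simpa using hl.1, hl.2⟩
  · intro l₁ _ l₂ _ h
    have := congrArg List.reverse h
    simpa using this
  · intro m hm
    simp only [Finset.mem_filter, mem_allW] at hm
    refine ⟨m.reverse, ?_, by simp⟩
    simp only [Finset.mem_filter, mem_allW]
    exact ⟨by simpa using hm.1, by simpa using hm.2⟩

open Filter

noncomputable def tribo : ℝ :=
  (1 + (19 + 3 * Real.sqrt 33) ^ ((1 : ℝ) / 3) + (19 - 3 * Real.sqrt 33) ^ ((1 : ℝ) / 3)) / 3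

lemma sqrt33_lt : Real.sqrt 33 < 6 := by
  rw [show (6:ℝ) = Real.sqrt 36 by
    rw [show (36:ℝ) = 6^2 by norm_num, Real.sqrt_sq (by norm_num)]]
  exact Real.sqrt_lt_sqrt (by norm_num) (by norm_num)

lemma cube_rpow (x : ℝ) (hx : 0 ≤ x) : (x ^ ((1:ℝ)/3)) ^ 3 = x := by
  rw [← Real.rpow_natCast (x ^ ((1:ℝ)/3)) 3, ← Real.rpow_mul hx]
  norm_num

lemma tribo_cubic : tribo ^ 3 = tribo ^ 2 + tribo + 1 := by
  have hs : Real.sqrt 33 ^ 2 = 33 := Real.sq_sqrt (by norm_num)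
  have hA : (0:ℝ) ≤ 19 + 3 * Real.sqrt 33 := by positivity
  have hB : (0:ℝ) ≤ 19 - 3 * Real.sqrt 33 := by nlinarith [sqrt33_lt]
  have hu3 : ((19 + 3 * Real.sqrt 33) ^ ((1:ℝ)/3)) ^ 3 = 19 + 3 * Real.sqrt 33 := cube_rpow _ hA
  have hv3 : ((19 - 3 * Real.sqrt 33) ^ ((1:ℝ)/3)) ^ 3 = 19 - 3 * Real.sqrt 33 := cube_rpow _ hB
  have huv : (19 + 3 * Real.sqrt 33) ^ ((1:ℝ)/3) * (19 - 3 * Real.sqrt 33) ^ ((1:ℝ)/3) = 4 := by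
    rw [← Real.mul_rpow hA hB]
    have : (19 + 3 * Real.sqrt 33) * (19 - 3 * Real.sqrt 33) = 64 := by nlinarith [hs]
    rw [this, show (64:ℝ) = 4 ^ (3:ℕ) by norm_num, ← Real.rpow_natCast 4 3,
      ← Real.rpow_mul (by norm_num)]
    norm_num
  set u := (19 + 3 * Real.sqrt 33) ^ ((1:ℝ)/3)
  set v := (19 - 3 * Real.sqrt 33) ^ ((1:ℝ)/3)
  have ht : tribo = (1 + u + v)/3 := rfl
  rw [ht]
  linear_combination (1/27 : ℝ) * hu3 + (1/27 : ℝ) * hv3 + ((u+v)/9) * huv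

lemma tribo_gt_one : 1 < tribo := by
  have hB : (0:ℝ) < 19 - 3 * Real.sqrt 33 := by nlinarith [sqrt33_lt]
  have h2 : (2:ℝ) ≤ (19 + 3 * Real.sqrt 33) ^ ((1:ℝ)/3) := by
    rw [show (2:ℝ) = 8 ^ ((1:ℝ)/3) by
      rw [show (8:ℝ) = 2 ^ (3:ℕ) by norm_num, ← Real.rpow_natCast 2 3,
        ← Real.rpow_mul (by norm_num)]
      norm_num]
    apply Real.rpow_le_rpow (by norm_num) (by nlinarith [Real.sqrt_nonneg 33]) (by norm_num)
  have h3 : (0:ℝ) < (19 - 3 * Real.sqrt 33) ^ ((1:ℝ)/3) := Real.rpow_pos_of_pos hB _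
  have ht : tribo = (1 + (19 + 3 * Real.sqrt 33) ^ ((1:ℝ)/3) + (19 - 3 * Real.sqrt 33) ^ ((1:ℝ)/3))/3 := rfl
  rw [ht]
  linarith

lemma tribo_lt_two : tribo < 2 := by
  nlinarith [tribo_cubic, tribo_gt_one]

lemma tribo_unique (s : ℝ) (hs1 : 1 < s) (hs : s ^ 3 = s ^ 2 + s + 1) : s = tribo := by
  have h1 := tribo_gt_one
  have h2 := tribo_cubic
  have key : (s - tribo) * (s^2 + s*tribo + tribo^2 - s - tribo - 1) = 0 := by nlinarith
  have pos : s^2 + s*tribo + tribo^2 - s - tribo - 1 > 0 := by nlinarith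
  rcases mul_eq_zero.mp key with h | h
  · linarith
  · linarith

lemma tendsto_ratio (W : ℕ → ℝ) (h0 : W 0 = 1) (h1 : W 1 = 2) (h2 : W 2 = 4)
    (hrec : ∀ n, W (n+3) = W (n+2) + W (n+1) + W n) :
    Tendsto (fun n => W (n+1) / W n) atTop (nhds tribo) := by
  obtain ⟨t, htdef⟩ : ∃ t : ℝ, t = tribo := ⟨_, rfl⟩
  rw [← htdef]
  have ht1 : 1 < t := htdef ▸ tribo_gt_one
  have ht2 : t < 2 := htdef ▸ tribo_lt_two
  have htc : t ^ 3 = t ^ 2 + t + 1 := by rw [htdef]; exact tribo_cubic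
  have ht0 : 0 < t := by linarith
  have htne : t ≠ 0 := ne_of_gt ht0
  -- lower bound
  have hWlb : ∀ n, t ^ n ≤ W n := by
    intro n
    induction n using Nat.strong_induction_on with
    | _ n ih =>
      match n with
      | 0 => simpa using h0.ge
      | 1 => rw [h1, pow_one]; linarith
      | 2 => rw [h2]; nlinarith
      | (m+3) =>
        have i0 := ih m (by omega)
        have i1 := ih (m+1) (by omega)
        have i2 := ih (m+2) (by omega)
        have e : t ^ (m+3) = t^m * t^3 := by ring
        rw [hrec m, e, htc]
        have e1 : t^(m+1) = t^m * t := by ring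
        have e2 : t^(m+2) = t^m * t^2 := by ring
        nlinarith [pow_pos ht0 m]
  have hWpos : ∀ n, 0 < W n := fun n => lt_of_lt_of_le (pow_pos ht0 n) (hWlb n)
  -- error sequence
  obtain ⟨u, hudef⟩ : ∃ u : ℕ → ℝ, u = fun n => W (n+1) - t * W n := ⟨_, rfl⟩
  have hu : ∀ n, t * u (n+2) = (1-t) * u (n+1) * t - u n := by
    intro n
    have e2 : u (n+2) = W (n+3) - t * W (n+2) := by simp only [hudef]
    have e1 : u (n+1) = W (n+2) - t * W (n+1) := by simp only [hudef]
    have e0 : u n = W (n+1) - t * W n := by simp only [hudef]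
    rw [e2, e1, e0, hrec n]
    linear_combination (-(W (n+1))) * htc
  obtain ⟨Q, hQdef⟩ : ∃ Q : ℕ → ℝ,
      Q = fun n => t * (u (n+1))^2 + t * (t-1) * (u (n+1)) * (u n) + (u n)^2 := ⟨_, rfl⟩
  have hQ : ∀ n, t * Q (n+1) = Q n := by
    intro n
    have e : Q (n+1) = t * (u (n+2))^2 + t * (t-1) * (u (n+2)) * (u (n+1)) + (u (n+1))^2 := by
      simp only [hQdef]
    have e' : Q n = t * (u (n+1))^2 + t * (t-1) * (u (n+1)) * (u n) + (u n)^2 := by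
      simp only [hQdef]
    have hrec2 := hu n
    rw [e, e']
    linear_combination (t*u (n+2) + ((1-t)*u (n+1)*t - u n) + t*(t-1)*u (n+1)) * hrec2
  have hQn : ∀ n, Q n * t ^ n = Q 0 := by
    intro n
    induction n with
    | zero => simp
    | succ n ih => rw [← ih, ← hQ n, pow_succ]; ring
  obtain ⟨δ, hδdef⟩ : ∃ δ : ℝ, δ = 1 - t * (t-1)^2 / 4 := ⟨_, rfl⟩
  have hδ : 0 < δ := by rw [hδdef]; nlinarith
  have hQlb : ∀ n, δ * (u n)^2 ≤ Q n := by
    intro n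
    have e : Q n - δ * (u n)^2 = t * (u (n+1) + (t-1) * u n / 2)^2 := by
      simp only [hQdef, hδdef]; ring
    linarith [e, mul_nonneg (le_of_lt ht0) (sq_nonneg (u (n+1) + (t-1) * u n / 2))]
  obtain ⟨K, hKdef⟩ : ∃ K : ℝ, K = Q 0 / δ := ⟨_, rfl⟩
  have hK0 : 0 ≤ K := by
    rw [hKdef]
    apply div_nonneg _ (le_of_lt hδ)
    have := hQlb 0
    nlinarith [sq_nonneg (u 0)]
  have husq : ∀ n, (u n)^2 ≤ K * (1/t)^n := by
    intro n
    have h := hQlb n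
    have hQv : Q n = Q 0 * (1/t)^n := by
      rw [← hQn n]
      rw [one_div, inv_pow]
      field_simp
    rw [hQv] at h
    have hKe : K * (1/t)^n * δ = Q 0 * (1/t)^n := by
      rw [hKdef]; field_simp
    rw [← hKe] at h
    calc (u n)^2 = (δ * (u n)^2) / δ := by field_simp
      _ ≤ (K * (1/t)^n * δ) / δ := by gcongr
      _ = K * (1/t)^n := by field_simp
  -- square root bound
  obtain ⟨ρ, hρdef⟩ : ∃ ρ : ℝ, ρ = Real.sqrt (1/t) := ⟨_, rfl⟩
  have hρ0 : 0 ≤ ρ := hρdef ▸ Real.sqrt_nonneg _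
  have hρ1 : ρ < 1 := by
    have h1t : 1/t < 1 := by rw [div_lt_one ht0]; linarith
    have hsq : ρ^2 = 1/t := by rw [hρdef]; exact Real.sq_sqrt (by positivity)
    nlinarith [hρ0, hsq, h1t]
  have hsqrtpow : ∀ m : ℕ, Real.sqrt ((1/t)^m) = ρ ^ m := by
    intro m
    induction m with
    | zero => simp
    | succ m ih => rw [pow_succ, pow_succ, Real.sqrt_mul (by positivity), ih, hρdef]
  have huabs : ∀ n, |u n| ≤ Real.sqrt K * ρ ^ n := by
    intro n
    rw [← Real.sqrt_sq_eq_abs, ← hsqrtpow n, ← Real.sqrt_mul hK0]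
    exact Real.sqrt_le_sqrt (husq n)
  -- the normalized sequence
  obtain ⟨S, hSdef⟩ : ∃ S : ℕ → ℝ, S = fun n => W n / t ^ n := ⟨_, rfl⟩
  have hgen : ∀ (c rr : ℝ) (n : ℕ), c/t * (rr/t)^n * t^(n+1) = c * rr^n := by
    intro c rr n
    rw [div_pow, pow_succ]
    field_simp
  have hCauchy : CauchySeq S := by
    apply cauchySeq_of_le_geometric (ρ/t) (Real.sqrt K / t)
    · rw [div_lt_one ht0]; linarith
    · intro n
      rw [Real.dist_eq]
      have e : S n - S (n+1) = -(u n / t^(n+1)) := by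
        have eS1 : S (n+1) = W (n+1) / t^(n+1) := by simp only [hSdef]
        have eS0 : S n = W n / t^n := by simp only [hSdef]
        have eu : u n = W (n+1) - t * W n := by simp only [hudef]
        rw [eS1, eS0, eu, pow_succ]
        field_simp
        ring
      rw [e, abs_neg, abs_div, abs_of_pos (pow_pos ht0 (n+1)),
        div_le_iff₀ (pow_pos ht0 (n+1)), hgen]
      exact huabs n
  obtain ⟨A, hA⟩ := cauchySeq_tendsto_of_complete hCauchy
  have hA1 : 1 ≤ A := by
    apply ge_of_tendsto hA
    apply Eventually.of_forall
    intro n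
    have eS0 : S n = W n / t^n := by simp only [hSdef]
    rw [eS0, le_div_iff₀ (pow_pos ht0 n), one_mul]
    exact hWlb n
  have hAne : A ≠ 0 := by linarith
  have hshift : Tendsto (fun n => S (n+1)) atTop (nhds A) :=
    hA.comp (tendsto_add_atTop_nat 1)
  have hdiv : Tendsto (fun n => t * (S (n+1) / S n)) atTop (nhds (t * (A / A))) :=
    tendsto_const_nhds.mul (hshift.div hA hAne)
  rw [div_self hAne, mul_one] at hdiv
  apply hdiv.congr
  intro n
  have eS1 : S (n+1) = W (n+1) / t^(n+1) := by simp only [hSdef]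
  have eS0 : S n = W n / t^n := by simp only [hSdef]
  have hWne : W n ≠ 0 := ne_of_gt (hWpos n)
  have hW1ne : W (n+1) ≠ 0 := ne_of_gt (hWpos (n+1))
  rw [eS1, eS0, pow_succ]
  field_simp

open Filter in
theorem stmt13 :
    ∃ t : ℝ, 1 < t ∧ t ^ 3 = t ^ 2 + t + 1 ∧
      (∀ s : ℝ, 1 < s → s ^ 3 = s ^ 2 + s + 1 → s = t) ∧
      t = (1 + (19 + 3 * Real.sqrt 33) ^ ((1 : ℝ) / 3)
             + (19 - 3 * Real.sqrt 33) ^ ((1 : ℝ) / 3)) / 3 ∧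
      Filter.Tendsto (fun n : ℕ => (wcount 2 1 (n + 1) : ℝ) / (wcount 2 1 n : ℝ))
        Filter.atTop (nhds t) := by
  refine ⟨tribo, tribo_gt_one, tribo_cubic, fun s hs1 hs2 => tribo_unique s hs1 hs2, rfl, ?_⟩
  have h0 : ((wcount 2 1 0 : ℕ) : ℝ) = 1 := by
    rw [wcount_eq_gcount, gcount_base0]; norm_num
  have h1 : ((wcount 2 1 1 : ℕ) : ℝ) = 2 := by
    rw [wcount_eq_gcount, gcount_base1]; norm_num
  have h2 : ((wcount 2 1 2 : ℕ) : ℝ) = 4 := by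
    rw [wcount_eq_gcount, gcount_base2]; norm_num
  have hrec : ∀ n, ((wcount 2 1 (n+3) : ℕ) : ℝ)
      = ((wcount 2 1 (n+2) : ℕ) : ℝ) + ((wcount 2 1 (n+1) : ℕ) : ℝ) + ((wcount 2 1 n : ℕ) : ℝ) := by
    intro n
    rw [wcount_eq_gcount, wcount_eq_gcount, wcount_eq_gcount, wcount_eq_gcount, gcount_rec]
    push_cast
    ring
  exact tendsto_ratio (fun n => ((wcount 2 1 n : ℕ) : ℝ)) h0 h1 h2 hrec
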